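/- arXiv:1012.2563 — 4 statements merged into one kernel-verified Lean document; each statement's English description precedes it below -/
import Mathlib

section
/- Integration by parts for the residue: for all f, g in LaurentSeries ℂ, Res(g * D f) = − Res(f * D g). In particular the bilinear form c(f, g) := Res(g * D f) on LaurentSeries ℂ is antisymmetric. -/
open HahnSeries

/-- The formal derivative of Laurent series, defined coefficientwise by
`(D f).coeff n = (n + 1) • f.coeff (n + 1)`. -/
noncomputable def D : LaurentSeries ℂ →ₗ[ℂ] LaurentSeries ℂ where
  toFun f :=
    { coeff := fun n => (n + 1) • f.coeff (n + 1)
      isPWO_support' := by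
        have hmono : MonotoneOn (fun n : ℤ => n - 1) f.support := by
          intro a _ b _ h
          simpa using sub_le_sub_right h 1
        refine Set.IsPWO.mono (f.isPWO_support.image_of_monotoneOn hmono) ?_
        intro n hn
        have hf : f.coeff (n + 1) ≠ 0 := by
          intro h
          simp [h] at hn
        exact ⟨n + 1, hf, by ring⟩ }
  map_add' f g := by
    ext n
    simp [smul_add]
  map_smul' c f := by
    ext n
    simp
    ring

/-- The residue of a formal Laurent series: the coefficient of `z⁻¹`. -/
noncomputable def Res (f : LaurentSeries ℂ) : ℂ := f.coeff (-1)

/-!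
`D f = z⁻¹ θ f`, where the Euler derivative `θ = z d/dz` scales the coefficient of `zⁿ` by `n`.
Hence `Res (g * D f)` is the constant coefficient of `g * θ f`. Since `θ` is a derivation,
`Res (g * D f) + Res (f * D g)` is then the constant coefficient of `θ (f * g)`, which vanishes.
-/

namespace HahnSeries

variable {Γ R : Type*} [AddCommMonoid Γ] [PartialOrder Γ] [CommSemiring R]

/-- With `φ = Int.castAddHom R` on Laurent series this is the Euler derivative `z d/dz`. -/
def weightedDeriv (φ : Γ →+ R) (x : HahnSeries Γ R) : HahnSeries Γ R where
  coeff a := φ a * x.coeff a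
  isPWO_support' := x.isPWO_support.mono fun _ ha => right_ne_zero_of_mul ha

@[simp]
theorem coeff_weightedDeriv (φ : Γ →+ R) (x : HahnSeries Γ R) (a : Γ) :
    (weightedDeriv φ x).coeff a = φ a * x.coeff a :=
  rfl

theorem support_weightedDeriv_subset (φ : Γ →+ R) (x : HahnSeries Γ R) :
    (weightedDeriv φ x).support ⊆ x.support :=
  fun _ ha => right_ne_zero_of_mul ha

theorem weightedDeriv_mul [IsOrderedCancelAddMonoid Γ] (φ : Γ →+ R) (x y : HahnSeries Γ R) :
    weightedDeriv φ (x * y) = weightedDeriv φ x * y + x * weightedDeriv φ y := by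
  ext a
  rw [coeff_add, coeff_weightedDeriv, coeff_mul,
    coeff_mul_left' x.isPWO_support (support_weightedDeriv_subset φ x),
    coeff_mul_right' y.isPWO_support (support_weightedDeriv_subset φ y),
    Finset.mul_sum, ← Finset.sum_add_distrib]
  refine Finset.sum_congr rfl fun ij hij => ?_
  rw [← (Finset.mem_antidiagonal.mp hij).2.2, map_add, coeff_weightedDeriv, coeff_weightedDeriv]
  ring

end HahnSeries

theorem D_eq_single_mul_weightedDeriv (f : LaurentSeries ℂ) :
    D f = single (-1) 1 * weightedDeriv (Int.castAddHom ℂ) f := by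
  ext n
  rw [← sub_add_cancel n (-1), coeff_single_mul_add, one_mul, coeff_weightedDeriv]
  simp [D, zsmul_eq_mul]

theorem Res_mul_D (f g : LaurentSeries ℂ) :
    Res (g * D f) = (g * weightedDeriv (Int.castAddHom ℂ) f).coeff 0 := by
  rw [Res, D_eq_single_mul_weightedDeriv, mul_left_comm]
  simpa using coeff_single_mul_add (r := (1 : ℂ)) (x := g * _) (a := (0 : ℤ)) (b := -1)

theorem residue_integration_by_parts (f g : LaurentSeries ℂ) :
    Res (g * D f) = - Res (f * D g) := by
  rw [eq_neg_iff_add_eq_zero, Res_mul_D, Res_mul_D, mul_comm g, ← coeff_add,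
    ← weightedDeriv_mul, coeff_weightedDeriv, map_zero, zero_mul]
end

section
/- Coefficient formula for the cocycle: for all f, g in LaurentSeries ℂ, Res(g * D f) = Σᶠ n : ℤ, n • (f.coeff n * g.coeff (−n)), where the finsum has only finitely many nonzero terms since the supports of f and g are bounded below. -/
open HahnSeries

namespace HahnSeries

variable {Γ R : Type*} [AddCommGroup Γ] [PartialOrder Γ] [IsOrderedAddMonoid Γ]
  [NonUnitalNonAssocSemiring R]

theorem coeff_mul_eq_finsum (x y : R⟦Γ⟧) (a : Γ) :
    (x * y).coeff a = ∑ᶠ i, x.coeff i * y.coeff (a - i) := by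
  classical
  set s := Finset.antidiagonal x.isPWO_support y.isPWO_support a
  have hsupp : Function.support (fun i => x.coeff i * y.coeff (a - i)) ⊆ s.image Prod.fst := by
    intro i hi
    refine Finset.mem_image.2 ⟨(i, a - i), ?_, rfl⟩
    exact Finset.mem_antidiagonal.2
      ⟨left_ne_zero_of_mul hi, right_ne_zero_of_mul hi, add_sub_cancel i a⟩
  have hinj : Set.InjOn Prod.fst (s : Set (Γ × Γ)) := by
    intro p hp q hq hpq
    have hp := (Finset.mem_antidiagonal.1 hp).2.2
    have hq := (Finset.mem_antidiagonal.1 hq).2.2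
    exact Prod.ext hpq (by rw [← add_right_inj p.1, hp, hpq, hq])
  rw [finsum_eq_finsetSum_of_support_subset _ hsupp, Finset.sum_image hinj, coeff_mul]
  refine Finset.sum_congr rfl fun p hp => ?_
  rw [← (Finset.mem_antidiagonal.1 hp).2.2, add_sub_cancel_left]

end HahnSeries

theorem coeff_D (f : LaurentSeries ℂ) (n : ℤ) : (D f).coeff n = (n + 1) • f.coeff (n + 1) := rfl

theorem cocycle_coeff_formula (f g : LaurentSeries ℂ) :
    Res (g * D f) = ∑ᶠ n : ℤ, n • (f.coeff n * g.coeff (-n)) := by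
  rw [Res, coeff_mul_eq_finsum, ← finsum_comp_equiv (Equiv.neg ℤ)]
  refine finsum_congr fun n => ?_
  rw [Equiv.neg_apply, coeff_D, sub_neg_eq_add, neg_add_cancel_comm, zsmul_eq_mul, zsmul_eq_mul]
  ring
end

section
/- The Fock space carries a representation of the Heisenberg commutation relations: define ρ : ℤ → Module.End ℂ (MvPolynomial ℕ+ ℂ) by ρ(n) = the partial derivative ∂/∂x_n for n > 0, ρ(−n) = the operator of multiplication by n • X_n for n > 0, and ρ(0) = 0. Then for all n, m : ℤ, ρ(n) ∘ ρ(m) − ρ(m) ∘ ρ(n) = (if n + m = 0 then (n : ℂ) else 0) • id, i.e. [b_n, b_m] = n δ_{n,−m} · 1. -/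
/-!
Partial derivatives commute, since their commutator is a derivation of the polynomial ring
vanishing on every variable, and multiplication operators commute; so only a derivative
`∂/∂xₐ` against a multiplication `b • X_b` contributes. For any derivation `D`, the commutator
of `D` with multiplication by `q` is multiplication by `D q`, and `∂/∂xₐ (b • X_b) = b δ_{ab}`.
-/

open MvPolynomial

/-- The Fock representation of the Heisenberg generators on `ℂ[x₁, x₂, …]`:
`ρ n = ∂/∂xₙ` for `n > 0`, `ρ (-n)` is multiplication by `n • Xₙ` for `n > 0`,
and `ρ 0 = 0`. -/
noncomputable def fockRep (n : ℤ) : Module.End ℂ (MvPolynomial ℕ+ ℂ) :=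
  if h : 0 < n then
    (MvPolynomial.pderiv (⟨n.toNat, by omega⟩ : ℕ+)).toLinearMap
  else if h' : n < 0 then
    { toFun := fun p => ((-n).toNat • (X (⟨(-n).toNat, by omega⟩ : ℕ+) : MvPolynomial ℕ+ ℂ)) * p
      map_add' := fun p q => mul_add _ p q
      map_smul' := fun c p => mul_smul_comm c _ p }
  else 0

theorem Int.eq_zero_or_exists_pnat (n : ℤ) : n = 0 ∨ ∃ k : ℕ+, n = k ∨ n = -k := by
  obtain ⟨k, rfl | rfl⟩ := n.eq_nat_or_neg
  all_goals rcases k.eq_zero_or_pos with rfl | hk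
  all_goals first | exact .inl rfl | exact .inr ⟨⟨k, hk⟩, by simp⟩

theorem Derivation.comp_mulLeft_sub_mulLeft_comp {R A : Type*} [CommSemiring R] [CommRing A]
    [Algebra R A] (D : Derivation R A A) (a : A) :
    (D : A →ₗ[R] A) ∘ₗ LinearMap.mulLeft R a - LinearMap.mulLeft R a ∘ₗ D =
      LinearMap.mulLeft R (D a) := by
  ext b
  simp [D.leibniz, mul_comm b]

theorem MvPolynomial.pderiv_comp_pderiv_comm {R σ : Type*} [CommRing R] (i j : σ) :
    (pderiv i).toLinearMap ∘ₗ (pderiv j : Derivation R (MvPolynomial σ R) _).toLinearMap =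
      (pderiv j).toLinearMap ∘ₗ (pderiv i).toLinearMap := by
  classical
  have hbracket : ⁅pderiv i, pderiv j⁆ = (0 : Derivation R (MvPolynomial σ R) _) :=
    derivation_ext fun k => by
      rw [Derivation.commutator_apply]
      simp [pderiv_X, Pi.single_apply, apply_ite]
  have := congrArg (fun D : Derivation R _ _ => (D : Module.End R (MvPolynomial σ R))) hbracket
  simpa [Derivation.commutator_coe_linear_map, LieRing.of_associative_ring_bracket, sub_eq_zero,
    Module.End.mul_eq_comp] using this

theorem fockRep_zero : fockRep 0 = 0 := rfl

theorem fockRep_pnat (k : ℕ+) : fockRep k = (pderiv k).toLinearMap :=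
  dif_pos (by positivity)

theorem fockRep_neg_pnat (k : ℕ+) :
    fockRep (-k) = LinearMap.mulLeft ℂ ((k : ℕ) • X k) := by
  have hk : (-k : ℤ) < 0 := by simp
  rw [show fockRep (-k) = _ from (dif_neg hk.not_gt).trans (dif_pos hk)]
  refine LinearMap.ext fun p => ?_
  simp only [LinearMap.coe_mk, AddHom.coe_mk, neg_neg, LinearMap.mulLeft_apply]
  rfl

theorem fockRep_pnat_comm (a b : ℕ+) : fockRep a ∘ₗ fockRep b = fockRep b ∘ₗ fockRep a := by
  rw [fockRep_pnat, fockRep_pnat, pderiv_comp_pderiv_comm]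

theorem fockRep_neg_pnat_comm (a b : ℕ+) :
    fockRep (-a) ∘ₗ fockRep (-b) = fockRep (-b) ∘ₗ fockRep (-a) := by
  simp only [fockRep_neg_pnat, ← LinearMap.mulLeft_mul, mul_comm]

theorem fockRep_pnat_comp_neg_sub (a b : ℕ+) :
    fockRep a ∘ₗ fockRep (-b) - fockRep (-b) ∘ₗ fockRep a =
      if a = b then (a : ℂ) • LinearMap.id else 0 := by
  rw [fockRep_pnat, fockRep_neg_pnat, Derivation.comp_mulLeft_sub_mulLeft_comp]
  split_ifs with hab
  · subst hab
    refine LinearMap.ext fun p => ?_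
    simp [Nat.cast_smul_eq_nsmul, nsmul_eq_mul]
  · simp [pderiv_X_of_ne (Ne.symm hab)]

theorem fock_heisenberg_relations (n m : ℤ) :
    fockRep n ∘ₗ fockRep m - fockRep m ∘ₗ fockRep n =
      (if n + m = 0 then (n : ℂ) else 0) • LinearMap.id := by
  rcases n.eq_zero_or_exists_pnat with rfl | ⟨a, rfl | rfl⟩
  · simp [fockRep_zero]
  all_goals rcases m.eq_zero_or_exists_pnat with rfl | ⟨b, rfl | rfl⟩
  · simp [fockRep_zero]
  · rw [fockRep_pnat_comm, sub_self, if_neg (by positivity), zero_smul]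
  · rw [fockRep_pnat_comp_neg_sub]
    by_cases hab : a = b
    · subst hab
      simp
    · simp [hab, add_neg_eq_zero]
  · simp [fockRep_zero]
  · rw [← neg_sub, fockRep_pnat_comp_neg_sub]
    by_cases hab : b = a
    · subst hab
      simp
      exact (neg_smul _ _).symm
    · simp [hab, Ne.symm hab, neg_add_eq_zero]
  · rw [fockRep_neg_pnat_comm, sub_self,
      if_neg (by rw [← neg_add, neg_eq_zero]; positivity), zero_smul]
end

section
/- Irreducibility of the Fock representation: if N is a ℂ-submodule of MvPolynomial ℕ+ ℂ such that for every p ∈ N and every index i : ℕ+ both pderiv i p ∈ N and X_i * p ∈ N, then N = ⊥ or N = ⊤. -/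
/-!
A nonzero `N` contains `1`: differentiating a nonzero element of minimal total degree can only
give `0`, so that element is a nonzero constant. Closure under every `X i * ·` makes `N` closed
under multiplication by arbitrary polynomials, so `N ∋ q * 1` for every `q`.
-/

open MvPolynomial

namespace MvPolynomial

variable {R σ : Type*} [CommSemiring R]

theorem totalDegree_pderiv_lt {p : MvPolynomial σ R} {i : σ} (h : pderiv i p ≠ 0) :
    (pderiv i p).totalDegree < p.totalDegree := by
  obtain ⟨m, hm, hmax⟩ := Finset.exists_mem_eq_sup _ (support_nonempty.2 h)
    fun s : σ →₀ ℕ => s.sum fun _ e => e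
  have hshift : m + Finsupp.single i 1 ∈ p.support := by
    rw [mem_support_iff, coeff_pderiv] at hm
    exact mem_support_iff.2 (left_ne_zero_of_mul hm)
  calc (pderiv i p).totalDegree = m.sum fun _ e => e := hmax
    _ < (m + Finsupp.single i 1).sum fun _ e => e := by
      rw [Finsupp.sum_add_index' (fun _ => rfl) fun _ _ _ => rfl, Finsupp.sum_single_index rfl]
      omega
    _ ≤ p.totalDegree := le_totalDegree hshift

theorem eq_C_of_forall_pderiv_eq_zero [NoZeroDivisors R] [CharZero R] {p : MvPolynomial σ R}
    (h : ∀ i, pderiv i p = 0) : p = C (coeff 0 p) := by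
  classical
  ext m
  rw [coeff_C]
  split_ifs with hm
  · rw [hm]
  obtain ⟨i, hi⟩ : ∃ i, m i ≠ 0 := Finsupp.ne_iff.1 (Ne.symm hm)
  have hle : Finsupp.single i 1 ≤ m := Finsupp.single_le_iff.2 (Nat.one_le_iff_ne_zero.2 hi)
  have hcoeff := coeff_pderiv (i := i) p (m - Finsupp.single i 1)
  rw [h i, coeff_zero, tsub_add_cancel_of_le hle] at hcoeff
  exact (mul_eq_zero.1 hcoeff.symm).resolve_right (Nat.cast_add_one_ne_zero _)

theorem mul_mem_of_forall_X_mul_mem (N : Submodule R (MvPolynomial σ R))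
    (hN : ∀ p ∈ N, ∀ i, X i * p ∈ N) (q : MvPolynomial σ R) {p : MvPolynomial σ R}
    (hp : p ∈ N) : q * p ∈ N := by
  induction q using MvPolynomial.induction_on generalizing p with
  | C a => simpa only [smul_eq_C_mul] using N.smul_mem a hp
  | add q₁ q₂ h₁ h₂ => simpa only [add_mul] using N.add_mem (h₁ hp) (h₂ hp)
  | mul_X q i ih => simpa only [mul_assoc, mul_comm (X i)] using ih (hN p hp i)

theorem one_mem_of_forall_pderiv_mem {K : Type*} [Field K] [CharZero K]
    (N : Submodule K (MvPolynomial σ K)) (hN : ∀ p ∈ N, ∀ i, pderiv i p ∈ N)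
    {p : MvPolynomial σ K} (hpN : p ∈ N) (hp : p ≠ 0) : (1 : MvPolynomial σ K) ∈ N := by
  induction hdeg : p.totalDegree using Nat.strong_induction_on generalizing p with
  | _ n ih =>
  by_cases hconst : ∀ i, pderiv i p = 0
  · obtain ⟨a, rfl⟩ : ∃ a, p = C a := ⟨_, eq_C_of_forall_pderiv_eq_zero hconst⟩
    have ha : a ≠ 0 := fun h => hp (by rw [h, C_0])
    have hone : a⁻¹ • C a = (1 : MvPolynomial σ K) := by
      rw [smul_eq_C_mul, ← C_mul, inv_mul_cancel₀ ha, C_1]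
    exact hone ▸ N.smul_mem _ hpN
  · obtain ⟨i, hi⟩ := not_forall.1 hconst
    exact ih _ (hdeg ▸ totalDegree_pderiv_lt hi) (hN p hpN i) hi rfl

end MvPolynomial

theorem fock_representation_irreducible (N : Submodule ℂ (MvPolynomial ℕ+ ℂ))
    (hN : ∀ p ∈ N, ∀ i : ℕ+, pderiv i p ∈ N ∧ X i * p ∈ N) :
    N = ⊥ ∨ N = ⊤ := by
  refine or_iff_not_imp_left.2 fun hbot => ?_
  obtain ⟨p, hpN, hp⟩ := Submodule.exists_mem_ne_zero_of_ne_bot hbot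
  have hone : (1 : MvPolynomial ℕ+ ℂ) ∈ N :=
    one_mem_of_forall_pderiv_mem N (fun p hp i => (hN p hp i).1) hpN hp
  refine Submodule.eq_top_iff'.2 fun q => ?_
  simpa only [mul_one] using mul_mem_of_forall_X_mul_mem N (fun p hp i => (hN p hp i).2) q hone
end
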